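/- Let R̂ be an N×N Hermitian matrix and γ > 0. For any w ∈ ℂ^N, the supremum of w^H R w over all Hermitian matrices R with ‖R - R̂‖_F ≤ √γ equals w^H R̂ w + √γ ‖w‖², and it is attained at R = R̂ + √γ (w w^H)/‖w‖² when w ≠ 0. -/

import Mathlib

/-!
The quadratic form `X ↦ wᴴ X w` is the Frobenius inner product with `w wᴴ`, whose
Frobenius norm is `‖w‖²`. By Cauchy–Schwarz,
`Re (wᴴ (R - R̂) w) ≤ ‖w‖² ‖R - R̂‖_F ≤ √γ ‖w‖²`,
with equality when `R - R̂` is the multiple of `w wᴴ` of Frobenius norm `√γ`.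
-/

open Matrix Complex
open scoped ComplexOrder

/-- The largest real eigenvalue of a complex matrix (as `sSup` of its set of real
eigenvalues); for a Hermitian matrix this is the largest eigenvalue. -/
noncomputable def lambdaMax {N : ℕ} (A : Matrix (Fin N) (Fin N) ℂ) : ℝ :=
  sSup {t : ℝ | ∃ v : Fin N → ℂ, v ≠ 0 ∧ A.mulVec v = (t : ℂ) • v}

open Classical in
/-- The inverse of the positive definite square root of a positive definite matrix
(junk value `0` if the matrix is not positive definite). -/
noncomputable def isqrt {N : ℕ} (R : Matrix (Fin N) (Fin N) ℂ) : Matrix (Fin N) (Fin N) ℂ :=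
  if h : R.PosDef then
    ((h.posSemidef.1.eigenvectorUnitary : Matrix (Fin N) (Fin N) ℂ) *
      diagonal ((↑) ∘ (Real.sqrt ·) ∘ h.posSemidef.1.eigenvalues) *
      (star h.posSemidef.1.eigenvectorUnitary : Matrix (Fin N) (Fin N) ℂ))⁻¹ else 0

/-- Euclidean norm of a complex vector. -/
noncomputable def vecNorm {N : ℕ} (v : Fin N → ℂ) : ℝ :=
  Real.sqrt (∑ i, Complex.normSq (v i))

/-- Frobenius norm of a complex matrix. -/
noncomputable def frobNorm {N M : ℕ} (X : Matrix (Fin N) (Fin M) ℂ) : ℝ :=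
  Real.sqrt (∑ i, ∑ j, Complex.normSq (X i j))

section FrobeniusInner

variable {N M : ℕ}

noncomputable def frobeniusVec (X : Matrix (Fin N) (Fin M) ℂ) :
    EuclideanSpace ℂ (Fin N × Fin M) :=
  WithLp.toLp 2 fun p => X p.1 p.2

lemma frobeniusVec_smul (c : ℂ) (X : Matrix (Fin N) (Fin M) ℂ) :
    frobeniusVec (c • X) = c • frobeniusVec X :=
  rfl

lemma frobNorm_eq_norm_frobeniusVec (X : Matrix (Fin N) (Fin M) ℂ) :
    frobNorm X = ‖frobeniusVec X‖ := by
  simp [frobNorm, frobeniusVec, EuclideanSpace.norm_eq, Fintype.sum_prod_type, Complex.sq_norm]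

lemma frobNorm_real_smul (c : ℝ) (X : Matrix (Fin N) (Fin M) ℂ) :
    frobNorm (c • X) = |c| * frobNorm X := by
  rw [frobNorm_eq_norm_frobeniusVec, frobNorm_eq_norm_frobeniusVec, ← Complex.coe_smul,
    frobeniusVec_smul, norm_smul, Complex.norm_real, Real.norm_eq_abs]

end FrobeniusInner

section QuadraticForm

variable {N : ℕ}

lemma star_dotProduct_mulVec_eq_inner (w : Fin N → ℂ) (X : Matrix (Fin N) (Fin N) ℂ) :
    star w ⬝ᵥ X *ᵥ w = inner ℂ (frobeniusVec (vecMulVec w (star w))) (frobeniusVec X) := by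
  simp only [frobeniusVec, PiLp.inner_apply, Fintype.sum_prod_type, dotProduct, mulVec,
    vecMulVec_apply, Finset.mul_sum, RCLike.inner_apply, Pi.star_apply]
  refine Finset.sum_congr rfl fun i _ => Finset.sum_congr rfl fun j _ => ?_
  simp only [RCLike.star_def, map_mul, RingHomCompTriple.comp_apply, RingHom.id_apply]
  ring

lemma frobNorm_vecMulVec_star (w : Fin N → ℂ) :
    frobNorm (vecMulVec w (star w)) = vecNorm w ^ 2 := by
  have hS : 0 ≤ ∑ i, Complex.normSq (w i) :=
    Finset.sum_nonneg fun i _ => Complex.normSq_nonneg _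
  simp only [frobNorm, vecNorm, Real.sq_sqrt hS, vecMulVec_apply, Pi.star_apply, map_mul,
    Complex.star_def, Complex.normSq_conj, ← Finset.mul_sum, ← Finset.sum_mul]
  exact Real.sqrt_mul_self hS

lemma re_star_dotProduct_mulVec_le (w : Fin N → ℂ) (X : Matrix (Fin N) (Fin N) ℂ) :
    (star w ⬝ᵥ X *ᵥ w).re ≤ vecNorm w ^ 2 * frobNorm X := by
  rw [star_dotProduct_mulVec_eq_inner, ← frobNorm_vecMulVec_star, frobNorm_eq_norm_frobeniusVec,
    frobNorm_eq_norm_frobeniusVec]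
  exact re_inner_le_norm (𝕜 := ℂ) _ _

lemma re_star_dotProduct_smul_vecMulVec_mulVec (c : ℝ) (w : Fin N → ℂ) :
    (star w ⬝ᵥ (c • vecMulVec w (star w)) *ᵥ w).re = c * vecNorm w ^ 4 := by
  rw [star_dotProduct_mulVec_eq_inner, ← Complex.coe_smul, frobeniusVec_smul, inner_smul_right,
    inner_self_eq_norm_sq_to_K (𝕜 := ℂ), ← frobNorm_eq_norm_frobeniusVec, frobNorm_vecMulVec_star,
    RCLike.ofReal_eq_complex_ofReal, ← Complex.ofReal_pow, Complex.re_ofReal_mul,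
    Complex.ofReal_re]
  ring

lemma isHermitian_smul_vecMulVec_star (c : ℝ) (w : Fin N → ℂ) :
    (c • vecMulVec w (star w)).IsHermitian :=
  (posSemidef_vecMulVec_self_star w).isHermitian.smul (IsSelfAdjoint.all c)

end QuadraticForm

theorem sup_quad_over_frobenius_ball_general {N : ℕ}
    (Rhat : Matrix (Fin N) (Fin N) ℂ) (hRhat : Rhat.IsHermitian)
    (γ : ℝ) (w : Fin N → ℂ) :
    IsLUB
      {r : ℝ | ∃ R : Matrix (Fin N) (Fin N) ℂ, R.IsHermitian ∧
        frobNorm (R - Rhat) ≤ Real.sqrt γ ∧ r = (star w ⬝ᵥ R.mulVec w).re}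
      ((star w ⬝ᵥ Rhat.mulVec w).re + Real.sqrt γ * vecNorm w ^ 2) ∧
    (w ≠ 0 →
      (Rhat + (Real.sqrt γ / vecNorm w ^ 2) • vecMulVec w (star w)).IsHermitian ∧
      frobNorm ((Rhat + (Real.sqrt γ / vecNorm w ^ 2) • vecMulVec w (star w)) - Rhat)
        ≤ Real.sqrt γ ∧
      (star w ⬝ᵥ (Rhat + (Real.sqrt γ / vecNorm w ^ 2) • vecMulVec w (star w)).mulVec w).re
        = (star w ⬝ᵥ Rhat.mulVec w).re + Real.sqrt γ * vecNorm w ^ 2) := by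
  set c := Real.sqrt γ / vecNorm w ^ 2 with hc
  have hc_nonneg : 0 ≤ c := by positivity
  -- for `w = 0` the junk value `c = 0` makes `Rhat` itself the maximiser
  have hc_norm : c * vecNorm w ^ 2 ≤ Real.sqrt γ ∧
      c * vecNorm w ^ 4 = Real.sqrt γ * vecNorm w ^ 2 := by
    rcases eq_or_ne (vecNorm w ^ 2) 0 with h | h
    · simp [hc, h, Real.sqrt_nonneg]
    · constructor
      · rw [hc, div_mul_cancel₀ _ h]
      · rw [hc]; field_simp
  have hquad (R : Matrix (Fin N) (Fin N) ℂ) : (star w ⬝ᵥ R *ᵥ w).re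
      = (star w ⬝ᵥ Rhat *ᵥ w).re + (star w ⬝ᵥ (R - Rhat) *ᵥ w).re := by
    simp [sub_mulVec, dotProduct_sub]
  have hattain : (Rhat + c • vecMulVec w (star w)).IsHermitian ∧
      frobNorm ((Rhat + c • vecMulVec w (star w)) - Rhat) ≤ Real.sqrt γ ∧
      (star w ⬝ᵥ (Rhat + c • vecMulVec w (star w)) *ᵥ w).re
        = (star w ⬝ᵥ Rhat *ᵥ w).re + Real.sqrt γ * vecNorm w ^ 2 := by
    refine ⟨hRhat.add (isHermitian_smul_vecMulVec_star c w), ?_, ?_⟩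
    · rw [add_sub_cancel_left, frobNorm_real_smul, frobNorm_vecMulVec_star,
        abs_of_nonneg hc_nonneg]
      exact hc_norm.1
    · rw [hquad, add_sub_cancel_left, re_star_dotProduct_smul_vecMulVec_mulVec, hc_norm.2]
  refine ⟨⟨?_, fun b hb => hattain.2.2 ▸ hb ⟨_, hattain.1, hattain.2.1, rfl⟩⟩, fun _ => hattain⟩
  rintro _ ⟨R, -, hR, rfl⟩
  rw [hquad R]
  gcongr
  calc (star w ⬝ᵥ (R - Rhat) *ᵥ w).re ≤ vecNorm w ^ 2 * frobNorm (R - Rhat) :=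
        re_star_dotProduct_mulVec_le w _
    _ ≤ vecNorm w ^ 2 * Real.sqrt γ := by gcongr
    _ = Real.sqrt γ * vecNorm w ^ 2 := mul_comm _ _

/-- the supremum of `wᴴ R w` over Hermitian `R` with `‖R - R̂‖_F ≤ √γ`
equals `wᴴ R̂ w + √γ ‖w‖²`, attained at `R = R̂ + √γ (w wᴴ)/‖w‖²` when `w ≠ 0`. -/
theorem sup_quad_over_frobenius_ball {N : ℕ}
    (Rhat : Matrix (Fin N) (Fin N) ℂ) (hRhat : Rhat.IsHermitian)
    (γ : ℝ) (hγ : 0 < γ) (w : Fin N → ℂ) :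
    IsLUB
      {r : ℝ | ∃ R : Matrix (Fin N) (Fin N) ℂ, R.IsHermitian ∧
        frobNorm (R - Rhat) ≤ Real.sqrt γ ∧ r = (star w ⬝ᵥ R.mulVec w).re}
      ((star w ⬝ᵥ Rhat.mulVec w).re + Real.sqrt γ * vecNorm w ^ 2) ∧
    (w ≠ 0 →
      (Rhat + (Real.sqrt γ / vecNorm w ^ 2) • vecMulVec w (star w)).IsHermitian ∧
      frobNorm ((Rhat + (Real.sqrt γ / vecNorm w ^ 2) • vecMulVec w (star w)) - Rhat)
        ≤ Real.sqrt γ ∧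
      (star w ⬝ᵥ (Rhat + (Real.sqrt γ / vecNorm w ^ 2) • vecMulVec w (star w)).mulVec w).re
        = (star w ⬝ᵥ Rhat.mulVec w).re + Real.sqrt γ * vecNorm w ^ 2) :=
  sup_quad_over_frobenius_ball_general Rhat hRhat γ w
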